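/- arXiv:1805.09816 — 3 statements merged into one kernel-verified Lean document; each statement's English description precedes it below -/
import Mathlib

section
/- Let $f \in H^1(\mathbb{T}^4)$ satisfy $\|f\|^2_{H^1_*} < y_W$ and $E_*(f) < (1-\delta_0) E_W$, where $\|f\|^2_{H^1_*} = \|f\|^2_{\dot H^1} + c_* \|f\|^2_{L^2}$, $E_*(f) = \frac12 \|f\|^2_{H^1_*} - \frac14 \|f\|^4_{L^4}$, $y_W = 1/C_4^4$, $E_W = \frac{1}{4 C_4^4}$, and the Sobolev inequality $\|f\|^2_{L^4} \le C_4^2 \|f\|^2_{H^1_*}$ holds. Then there exists $\bar\delta = \bar\delta(\delta_0) > 0$ such that $E_*(f) \ge \frac{1}{4}(1+\bar\delta) \|f\|^2_{H^1_*}$. -/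
/-- Lemma 2.4(i), conclusion (2.13): coercivity of the modified energy below the ground
state. Here `X = ‖f‖²_{H¹_*(𝕋⁴)}`, `Y = ‖f‖²_{L⁴(𝕋⁴)}` (so `Y² = ‖f‖⁴_{L⁴}`),
`Y ≤ C₄² X` is the Sobolev inequality, `y_W = 1/C₄⁴`, `E_W = 1/(4C₄⁴)`, and
`E_*(f) = X/2 - Y²/4`. -/
theorem stmt4 (δ0 : ℝ) (hδ0 : 0 < δ0) (hδ0' : δ0 < 1) :
    ∃ δb : ℝ, 0 < δb ∧
      ∀ C4 X Y : ℝ, 0 < C4 → 0 ≤ X → 0 ≤ Y →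
        Y ≤ C4 ^ 2 * X →
        X < 1 / C4 ^ 4 →
        (1 / 2) * X - (1 / 4) * Y ^ 2 < (1 - δ0) * (1 / (4 * C4 ^ 4)) →
        (1 / 4) * (1 + δb) * X ≤ (1 / 2) * X - (1 / 4) * Y ^ 2 := by
  refine ⟨Real.sqrt δ0, Real.sqrt_pos.mpr hδ0, ?_⟩
  intro C4 X Y hC4 hX hY hSob hXW hE
  set s := Real.sqrt δ0 with hs
  have hs0 : 0 < s := Real.sqrt_pos.mpr hδ0
  have hs2 : s ^ 2 = δ0 := Real.sq_sqrt hδ0.le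
  have hC4p : (0:ℝ) < C4 ^ 4 := by positivity
  -- t = C4^4 * X < 1
  have ht : C4 ^ 4 * X < 1 := by
    have := (mul_lt_mul_of_pos_right hXW hC4p)
    rw [div_mul_cancel₀] at this
    · linarith [mul_comm X (C4 ^ 4)]
    · exact ne_of_gt hC4p
  -- Y^2 ≤ C4^4 * X^2
  have hY2 : Y ^ 2 ≤ C4 ^ 4 * X ^ 2 := by
    have := mul_self_le_mul_self hY hSob
    nlinarith
  -- energy bound: X/2 - C4^4 X^2/4 < (1-δ0)/(4 C4^4)
  have hE2 : (1 / 2) * X - (1 / 4) * (C4 ^ 4 * X ^ 2) < (1 - δ0) * (1 / (4 * C4 ^ 4)) := by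
    nlinarith
  -- so (1 - C4^4 X)^2 > δ0, hence 1 - C4^4 X > s, i.e. C4^4 X < 1 - s
  have hkey : C4 ^ 4 * X < 1 - s := by
    have h1 : δ0 < (1 - C4 ^ 4 * X) ^ 2 := by
      have hmul : (1 / 2) * X * (4 * C4 ^ 4) - (1 / 4) * (C4 ^ 4 * X ^ 2) * (4 * C4 ^ 4)
          < 1 - δ0 := by
        have h4 : (0:ℝ) < 4 * C4 ^ 4 := by positivity
        have := (mul_lt_mul_of_pos_right hE2 h4)
        calc (1 / 2) * X * (4 * C4 ^ 4) - (1 / 4) * (C4 ^ 4 * X ^ 2) * (4 * C4 ^ 4)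
            = ((1 / 2) * X - (1 / 4) * (C4 ^ 4 * X ^ 2)) * (4 * C4 ^ 4) := by ring
          _ < (1 - δ0) * (1 / (4 * C4 ^ 4)) * (4 * C4 ^ 4) := this
          _ = 1 - δ0 := by field_simp
      nlinarith
    nlinarith [Real.sqrt_lt_sqrt hδ0.le h1,
      Real.sqrt_le_sqrt (sq_abs (1 - C4 ^ 4 * X) ▸ le_refl ((1 - C4 ^ 4 * X) ^ 2)),
      Real.sqrt_sq_eq_abs (1 - C4 ^ 4 * X), le_abs_self (1 - C4 ^ 4 * X)]
  -- conclude: Y^2 ≤ C4^4 X^2 ≤ (1-s) X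
  nlinarith [mul_le_mul_of_nonneg_right hkey.le hX]
end

section
/- Let $S \ge 1$, $M \ge S$, and let $t \in \mathbb{R}$ with $S M^{-2} \le |t| \le S^{-1}$. Suppose $t = a/q + \beta$ with $q \in \{1, \dots, M\}$, $a \in \mathbb{Z}$, $\gcd(a,q) = 1$, and $|\beta| \le (Mq)^{-1}$. Then $\frac{M}{\sqrt{q}(1 + M|t - a/q|^{1/2})} \lesssim S^{-1/2} M$. -/
/-- Number-theoretic kernel bound in the extinction lemma: for `1 ≤ S ≤ M`,
`SM⁻² ≤ |t| ≤ S⁻¹`, `t = a/q + β` with `1 ≤ q ≤ M`, `gcd(a,q) = 1`, `|β| ≤ (Mq)⁻¹`,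
one has `M / (√q (1 + M |t - a/q|^{1/2})) ≲ S^{-1/2} M`. -/
theorem stmt9 :
    ∃ C : ℝ, 0 < C ∧
      ∀ (S M t β : ℝ) (a : ℤ) (q : ℕ),
        1 ≤ S → S ≤ M →
        S * (M ^ 2)⁻¹ ≤ |t| → |t| ≤ S⁻¹ →
        1 ≤ q → (q : ℝ) ≤ M →
        a.gcd q = 1 →
        t = (a : ℝ) / (q : ℝ) + β →
        |β| ≤ (M * (q : ℝ))⁻¹ →
        M / (Real.sqrt q * (1 + M * Real.sqrt |t - (a : ℝ) / (q : ℝ)|)) ≤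
          C * S ^ (-(1 : ℝ) / 2) * M := by
  refine ⟨2, by norm_num, ?_⟩
  intro S M t β a q hS hSM ht1 ht2 hq hqM hgcd hteq hβ
  have hS0 : (0:ℝ) < S := lt_of_lt_of_le one_pos hS
  have hM0 : (0:ℝ) < M := lt_of_lt_of_le hS0 hSM
  have hq0 : (0:ℝ) < (q:ℝ) := by exact_mod_cast hq
  have hsqS : 0 < Real.sqrt S := Real.sqrt_pos.mpr hS0
  have hsqq1 : (1:ℝ) ≤ Real.sqrt q := by
    rw [show (1:ℝ) = Real.sqrt 1 from (Real.sqrt_one).symm]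
    exact Real.sqrt_le_sqrt (by exact_mod_cast hq)
  have hrpow : S ^ (-(1:ℝ)/2) = (Real.sqrt S)⁻¹ := by
    rw [Real.sqrt_eq_rpow, ← Real.rpow_neg hS0.le]
    norm_num
  -- key: denominator ≥ √S / 2
  have hD1 : (0:ℝ) ≤ M * Real.sqrt |t - (a : ℝ) / (q : ℝ)| :=
    mul_nonneg hM0.le (Real.sqrt_nonneg _)
  have hX : Real.sqrt S / 2 ≤
      Real.sqrt q * (1 + M * Real.sqrt |t - (a : ℝ) / (q : ℝ)|) := by
    by_cases ha : a = 0
    · subst ha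
      simp only [Int.cast_zero, zero_div, sub_zero] at *
      have h1 : Real.sqrt S ≤ M * Real.sqrt |t| := by
        have h2 : Real.sqrt (S * (M ^ 2)⁻¹) ≤ Real.sqrt |t| := Real.sqrt_le_sqrt ht1
        have h3 : Real.sqrt (S * (M ^ 2)⁻¹) = Real.sqrt S * M⁻¹ := by
          rw [Real.sqrt_mul hS0.le, Real.sqrt_inv, Real.sqrt_sq hM0.le]
        rw [h3] at h2
        calc Real.sqrt S = M * (Real.sqrt S * M⁻¹) := by field_simp
          _ ≤ M * Real.sqrt |t| := by
              exact mul_le_mul_of_nonneg_left h2 hM0.le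
      nlinarith [Real.sqrt_nonneg S]
    · -- a ≠ 0 : then q ≥ S/2
      have ha1 : (1:ℝ) ≤ |(a:ℝ)| := by
        have : (1:ℤ) ≤ |a| := Int.one_le_abs (by omega)
        exact_mod_cast this
      have hb : |(a:ℝ)/q| ≤ 2/S := by
        have h1 : |(a:ℝ)/q| = |t - β| := by rw [hteq]; ring_nf
        have h2 : |t - β| ≤ |t| + |β| := abs_sub _ _
        have h3 : (M * (q:ℝ))⁻¹ ≤ S⁻¹ := by
          have hq1 : (1:ℝ) ≤ (q:ℝ) := by exact_mod_cast hq
          have : S ≤ M * q := by nlinarith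
          exact inv_anti₀ hS0 this
        have := ht2
        rw [h1]
        calc |t - β| ≤ |t| + |β| := h2
          _ ≤ S⁻¹ + S⁻¹ := add_le_add ht2 (hβ.trans h3)
          _ = 2/S := by ring
      have hqS : S / 2 ≤ (q:ℝ) := by
        rw [abs_div, abs_of_nonneg hq0.le] at hb
        rw [div_le_div_iff₀ hq0 hS0] at hb
        nlinarith
      have h4 : Real.sqrt S / 2 ≤ Real.sqrt q := by
        have h5 : Real.sqrt (S/4) ≤ Real.sqrt q := Real.sqrt_le_sqrt (by linarith)
        have h6 : Real.sqrt (S/4) = Real.sqrt S / 2 := by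
          rw [show (4:ℝ) = 2^2 by norm_num, Real.sqrt_div hS0.le,
            Real.sqrt_sq (by norm_num : (0:ℝ) ≤ 2)]
        linarith [h6 ▸ h5]
      nlinarith [Real.sqrt_nonneg (q:ℝ)]
  have hXpos : (0:ℝ) < Real.sqrt q * (1 + M * Real.sqrt |t - (a : ℝ) / (q : ℝ)|) :=
    lt_of_lt_of_le (by positivity) hX
  have hmain : M / (Real.sqrt q * (1 + M * Real.sqrt |t - (a : ℝ) / (q : ℝ)|))
      ≤ M / (Real.sqrt S / 2) := by
    gcongr
  rw [hrpow]
  calc M / (Real.sqrt q * (1 + M * Real.sqrt |t - (a : ℝ) / (q : ℝ)|))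
      ≤ M / (Real.sqrt S / 2) := hmain
    _ = 2 * (Real.sqrt S)⁻¹ * M := by field_simp
end

section
/- Let $N \ge 1$, $B \ge 2$, and $p \in \mathbb{Z}^4$ with $|p| \ge BN$. Then $N^{-4} \sum_{v \in \mathbb{Z}^4} \big(1 + \frac{||p|^2 - |p+v|^2|}{N^2}\big)^{-10} \big(1 + \frac{|v|}{N}\big)^{-10} \lesssim B^{-1/100} + N^{-1/100}$, with implicit constant independent of $p$, $N$, $B$. -/
open Finset

/-- Euclidean norm of an integer vector in `ℤ⁴`. -/
noncomputable def znorm (w : Fin 4 → ℤ) : ℝ :=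
  Real.sqrt (∑ i, ((w i : ℝ)) ^ 2)


lemma sum_range_inv_sq (n : ℕ) :
    ∑ k ∈ Finset.range n, (((1:ℝ)+(k:ℝ))^2)⁻¹ ≤ 2 - 2/((n:ℝ)+1) := by
  induction n with
  | zero => norm_num
  | succ n ih =>
    rw [Finset.sum_range_succ]
    have h1 : (0:ℝ) < (n:ℝ) + 1 := by positivity
    have h2 : (0:ℝ) < (n:ℝ) + 2 := by positivity
    have key : (((1:ℝ)+(n:ℝ))^2)⁻¹ + 2/((n:ℝ)+2) ≤ 2/((n:ℝ)+1) := by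
      rw [inv_eq_one_div, div_add_div _ _ (by positivity) (ne_of_gt h2),
        div_le_div_iff₀ (by positivity) h1]
      nlinarith [sq_nonneg ((n:ℝ))]
    push_cast
    have e : ((n:ℝ)+1+1) = (n:ℝ)+2 := by ring
    rw [e]
    linarith
lemma sum_inv_sq (K : Finset ℕ) : ∑ k ∈ K, (((1:ℝ)+(k:ℝ))^2)⁻¹ ≤ 2 := by
  obtain ⟨n, hn⟩ := K.exists_nat_subset_range
  calc ∑ k ∈ K, (((1:ℝ)+(k:ℝ))^2)⁻¹ ≤ ∑ k ∈ Finset.range n, (((1:ℝ)+(k:ℝ))^2)⁻¹ :=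
        Finset.sum_le_sum_of_subset_of_nonneg hn (by intros; positivity)
    _ ≤ 2 - 2/((n:ℝ)+1) := sum_range_inv_sq n
    _ ≤ 2 := by
        have : (0:ℝ) ≤ 2/((n:ℝ)+1) := by positivity
        linarith

lemma card_le_diam (F : Finset ℤ) (L : ℝ) (hL : 0 ≤ L)
    (h : ∀ a ∈ F, ∀ b ∈ F, |(a:ℝ) - (b:ℝ)| ≤ L) : (F.card : ℝ) ≤ L + 1 := by
  rcases F.eq_empty_or_nonempty with rfl | hne
  · simp; linarith
  · set a₀ := F.min' hne with ha₀
    have hsub : F ⊆ Finset.Icc a₀ (a₀ + ⌊L⌋) := by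
      intro a ha
      rw [Finset.mem_Icc]
      refine ⟨F.min'_le a ha, ?_⟩
      have h1 : (a:ℝ) - (a₀:ℝ) ≤ L := by
        have := h a ha a₀ (F.min'_mem hne)
        exact (le_abs_self _).trans this
      have : (a - a₀ : ℤ) ≤ ⌊L⌋ := by
        rw [Int.le_floor]; push_cast; linarith
      omega
    have hcard : F.card ≤ (⌊L⌋ + 1).toNat := by
      have := Finset.card_le_card hsub
      rwa [Int.card_Icc, show a₀ + ⌊L⌋ + 1 - a₀ = ⌊L⌋ + 1 by ring] at this
    have hfl : (0:ℤ) ≤ ⌊L⌋ := Int.floor_nonneg.2 hL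
    have hc2 : (((⌊L⌋ + 1).toNat : ℕ) : ℝ) = (⌊L⌋:ℝ) + 1 := by
      rw [← Int.cast_natCast, Int.toNat_of_nonneg (by omega)]; push_cast; ring
    calc (F.card : ℝ) ≤ ((⌊L⌋ + 1).toNat : ℝ) := by exact_mod_cast hcard
      _ = ((⌊L⌋:ℝ) + 1) := hc2
      _ ≤ L + 1 := by linarith [Int.floor_le L]

lemma sum_g2_le (N : ℝ) (hN : 1 ≤ N) (A : Finset ℤ) :
    ∑ a ∈ A, ((1 + |(a:ℝ)|/N)^2)⁻¹ ≤ 8*N := by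
  classical
  have hN0 : (0:ℝ) < N := by linarith
  set M := ⌈N⌉₊ with hM
  have hM1 : 1 ≤ M := Nat.one_le_ceil_iff.2 hN0
  have hMN : N ≤ (M:ℝ) := Nat.le_ceil N
  set κ : ℤ → ℕ := fun a => a.natAbs / M with hκ
  rw [← Finset.sum_fiberwise_of_maps_to (fun a ha => Finset.mem_image_of_mem κ ha)
    (fun a => ((1 + |(a:ℝ)|/N)^2)⁻¹)]
  have fiber_bound : ∀ k ∈ A.image κ,
      ∑ a ∈ A.filter (fun a => κ a = k), ((1 + |(a:ℝ)|/N)^2)⁻¹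
        ≤ 2*(M:ℝ) * (((1:ℝ)+(k:ℝ))^2)⁻¹ := by
    intro k _
    have term_le : ∀ a ∈ A.filter (fun a => κ a = k),
        ((1 + |(a:ℝ)|/N)^2)⁻¹ ≤ (((1:ℝ)+(k:ℝ))^2)⁻¹ := by
      intro a ha
      rw [Finset.mem_filter] at ha
      have hk : (k:ℝ) * (M:ℝ) ≤ (a.natAbs : ℝ) := by
        have := Nat.div_mul_le_self a.natAbs M
        rw [← ha.2]
        exact_mod_cast this
      have habs : |(a:ℝ)| = (a.natAbs : ℝ) := by rw [Nat.cast_natAbs, Int.cast_abs]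
      have : (k:ℝ) ≤ |(a:ℝ)|/N := by
        rw [habs, le_div_iff₀ hN0]
        calc (k:ℝ) * N ≤ (k:ℝ) * M := by
              apply mul_le_mul_of_nonneg_left hMN (by positivity)
          _ ≤ _ := hk
      apply inv_anti₀ (by positivity)
      apply pow_le_pow_left₀ (by positivity)
      linarith
    have card_le : (A.filter (fun a => κ a = k)).card ≤ 2*M := by
      have hsub : A.filter (fun a => κ a = k) ⊆
          (Finset.Ico ((k*M : ℕ) : ℤ) (((k+1)*M : ℕ) : ℤ)) ∪
          (Finset.Ioc (-(((k+1)*M : ℕ) : ℤ)) (-((k*M : ℕ) : ℤ))) := by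
        intro a ha
        rw [Finset.mem_filter] at ha
        have h1 : k*M ≤ a.natAbs := by rw [← ha.2]; exact Nat.div_mul_le_self _ _
        have hd : a.natAbs / M = k := ha.2
        have h2 : a.natAbs < (k+1)*M :=
          (Nat.div_lt_iff_lt_mul (show 0 < M by omega)).1 (by omega : a.natAbs / M < k+1)
        rw [Finset.mem_union, Finset.mem_Ico, Finset.mem_Ioc]
        omega
      have c1 : (Finset.Ico ((k*M : ℕ) : ℤ) (((k+1)*M : ℕ) : ℤ)).card = M := by
        rw [Int.card_Ico, show (((k+1)*M : ℕ) : ℤ) - ((k*M : ℕ) : ℤ) = (M:ℤ) by push_cast; ring,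
          Int.toNat_natCast]
      have c2 : (Finset.Ioc (-(((k+1)*M : ℕ) : ℤ)) (-((k*M : ℕ) : ℤ))).card = M := by
        rw [Int.card_Ioc, show -((k*M : ℕ) : ℤ) - (-(((k+1)*M : ℕ) : ℤ)) = (M:ℤ) by push_cast; ring,
          Int.toNat_natCast]
      calc (A.filter (fun a => κ a = k)).card ≤ _ := Finset.card_le_card hsub
        _ ≤ _ + _ := Finset.card_union_le _ _
        _ ≤ 2*M := by rw [c1, c2]; omega
    calc ∑ a ∈ A.filter (fun a => κ a = k), ((1 + |(a:ℝ)|/N)^2)⁻¹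
        ≤ ∑ a ∈ A.filter (fun a => κ a = k), (((1:ℝ)+(k:ℝ))^2)⁻¹ :=
          Finset.sum_le_sum term_le
      _ = ((A.filter (fun a => κ a = k)).card : ℝ) * (((1:ℝ)+(k:ℝ))^2)⁻¹ := by
          rw [Finset.sum_const, nsmul_eq_mul]
      _ ≤ 2*(M:ℝ) * (((1:ℝ)+(k:ℝ))^2)⁻¹ := by
          apply mul_le_mul_of_nonneg_right _ (by positivity)
          exact_mod_cast card_le
  have hsum2 : ∑ k ∈ A.image κ, (((1:ℝ)+(k:ℝ))^2)⁻¹ ≤ 2 := sum_inv_sq _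
  calc ∑ j ∈ A.image κ, ∑ i ∈ A.filter (fun i => κ i = j), ((1 + |(i:ℝ)|/N)^2)⁻¹
      ≤ ∑ j ∈ A.image κ, 2*(M:ℝ) * (((1:ℝ)+(j:ℝ))^2)⁻¹ := Finset.sum_le_sum fiber_bound
    _ = 2*(M:ℝ) * ∑ j ∈ A.image κ, (((1:ℝ)+(j:ℝ))^2)⁻¹ := by rw [Finset.mul_sum]
    _ ≤ 2*(M:ℝ) * 2 := by
        apply mul_le_mul_of_nonneg_left hsum2 (by positivity)
    _ ≤ 8*N := by
        have := Nat.ceil_lt_add_one (le_of_lt hN0)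
        have hMR : (M:ℝ) < N + 1 := this
        linarith


lemma count_sum (N R q m : ℝ) (hN : 1 ≤ N) (hR : 0 < R) (A : Finset ℤ)
    (hA : ∀ a ∈ A, R ≤ |(a:ℝ) + q|) :
    ∑ a ∈ A, ((1 + |((a:ℝ)+q)^2 - m|/N^2)^10)⁻¹ ≤ 4*N^2/R + 4 := by
  classical
  have hN0 : (0:ℝ) < N := by linarith
  set κ : ℤ → ℕ := fun a => ⌊|((a:ℝ)+q)^2 - m|/N^2⌋₊ with hκ
  set g : ℤ → ℝ := fun a => ((1 + |((a:ℝ)+q)^2 - m|/N^2)^10)⁻¹ with hg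
  rw [← Finset.sum_fiberwise_of_maps_to (fun a ha => Finset.mem_image_of_mem κ ha) g]
  have fiber_bound : ∀ k ∈ A.image κ,
      ∑ a ∈ A.filter (fun a => κ a = k), g a
        ≤ (2*N^2/R + 2) * (((1:ℝ)+(k:ℝ))^2)⁻¹ := by
    intro k _
    set F := A.filter (fun a => κ a = k) with hF
    have hmem : ∀ a ∈ F, a ∈ A ∧ κ a = k := fun a ha => Finset.mem_filter.1 ha
    -- each term at most ((1+k)^10)⁻¹ ≤ ((1+k)^2)⁻¹ ... we only need ((1+k)^2)⁻¹ scaled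
    have term_le : ∀ a ∈ F, g a ≤ (((1:ℝ)+(k:ℝ))^10)⁻¹ := by
      intro a ha
      obtain ⟨_, hk⟩ := hmem a ha
      have h1 : (k:ℝ) ≤ |((a:ℝ)+q)^2 - m|/N^2 := by
        rw [← hk]
        exact Nat.floor_le (by positivity)
      apply inv_anti₀ (by positivity)
      apply pow_le_pow_left₀ (by positivity)
      linarith
    -- cardinality bound
    have key : ∀ a ∈ F, ∀ b ∈ F, ((a:ℝ)+q ≥ 0 → (b:ℝ)+q ≥ 0 → |(a:ℝ) - (b:ℝ)| ≤ ((k:ℝ)+1)*N^2/R)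
        ∧ ((a:ℝ)+q < 0 → (b:ℝ)+q < 0 → |(a:ℝ) - (b:ℝ)| ≤ ((k:ℝ)+1)*N^2/R) := by
      intro a ha b hb
      obtain ⟨haA, hka⟩ := hmem a ha
      obtain ⟨hbA, hkb⟩ := hmem b hb
      have hub : ∀ c : ℤ, c ∈ F → |((c:ℝ)+q)^2 - m| < ((k:ℝ)+1)*N^2 := by
        intro c hc
        obtain ⟨_, hkc⟩ := hmem c hc
        have hkc2 : ⌊|((c:ℝ)+q)^2 - m|/N^2⌋₊ = k := hkc
        have := Nat.lt_floor_add_one (|((c:ℝ)+q)^2 - m|/N^2)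
        rw [hkc2] at this
        calc |((c:ℝ)+q)^2 - m| = |((c:ℝ)+q)^2 - m|/N^2 * N^2 := by field_simp
          _ < ((k:ℝ)+1)*N^2 := by
              apply mul_lt_mul_of_pos_right _ (by positivity)
              linarith
      have hdiff : |((a:ℝ)+q)^2 - ((b:ℝ)+q)^2| < 2*(((k:ℝ)+1)*N^2) := by
        have t1 := hub a ha
        have t2 := hub b hb
        calc |((a:ℝ)+q)^2 - ((b:ℝ)+q)^2|
            = |(((a:ℝ)+q)^2 - m) - (((b:ℝ)+q)^2 - m)| := by ring_nf
          _ ≤ |((a:ℝ)+q)^2 - m| + |((b:ℝ)+q)^2 - m| := abs_sub _ _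
          _ < 2*(((k:ℝ)+1)*N^2) := by linarith
      have habs : |((a:ℝ)+q)^2 - ((b:ℝ)+q)^2| = |(a:ℝ)-(b:ℝ)| * |((a:ℝ)+q)+((b:ℝ)+q)| := by
        rw [← abs_mul]; ring_nf
      constructor
      · intro hpa hpb
        have ha' : R ≤ (a:ℝ)+q := by
          have := hA a haA; rw [abs_of_nonneg hpa] at this; exact this
        have hb' : R ≤ (b:ℝ)+q := by
          have := hA b hbA; rw [abs_of_nonneg hpb] at this; exact this
        have hsum : 2*R ≤ |((a:ℝ)+q)+((b:ℝ)+q)| := by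
          rw [abs_of_nonneg (by linarith)]; linarith
        rw [le_div_iff₀ hR]
        nlinarith [abs_nonneg ((a:ℝ)-(b:ℝ)), habs, hdiff]
      · intro hpa hpb
        have ha' : (a:ℝ)+q ≤ -R := by
          have := hA a haA; rw [abs_of_neg hpa] at this; linarith
        have hb' : (b:ℝ)+q ≤ -R := by
          have := hA b hbA; rw [abs_of_neg hpb] at this; linarith
        have hsum : 2*R ≤ |((a:ℝ)+q)+((b:ℝ)+q)| := by
          rw [abs_of_nonpos (by linarith)]; linarith
        rw [le_div_iff₀ hR]
        nlinarith [abs_nonneg ((a:ℝ)-(b:ℝ)), habs, hdiff]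
    have hL0 : (0:ℝ) ≤ ((k:ℝ)+1)*N^2/R := by positivity
    have cardP : ((F.filter (fun a : ℤ => 0 ≤ (a:ℝ)+q)).card : ℝ) ≤ ((k:ℝ)+1)*N^2/R + 1 := by
      apply card_le_diam _ _ hL0
      intro a ha b hb
      rw [Finset.mem_filter] at ha hb
      exact (key a ha.1 b hb.1).1 ha.2 hb.2
    have cardM : ((F.filter (fun a : ℤ => ¬ (0 ≤ (a:ℝ)+q))).card : ℝ) ≤ ((k:ℝ)+1)*N^2/R + 1 := by
      apply card_le_diam _ _ hL0
      intro a ha b hb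
      rw [Finset.mem_filter] at ha hb
      exact (key a ha.1 b hb.1).2 (by push_neg at ha; exact ha.2) (by push_neg at hb; exact hb.2)
    have cardF : (F.card : ℝ) ≤ 2*(((k:ℝ)+1)*N^2/R + 1) := by
      have := Finset.card_filter_add_card_filter_not (s := F) (p := fun a : ℤ => 0 ≤ (a:ℝ)+q)
      have hc : (F.card : ℝ) = ((F.filter (fun a : ℤ => 0 ≤ (a:ℝ)+q)).card : ℝ)
          + ((F.filter (fun a : ℤ => ¬ (0 ≤ (a:ℝ)+q))).card : ℝ) := by
        exact_mod_cast this.symm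
      rw [hc]; linarith
    calc ∑ a ∈ F, g a ≤ ∑ a ∈ F, (((1:ℝ)+(k:ℝ))^10)⁻¹ := Finset.sum_le_sum term_le
      _ = (F.card : ℝ) * (((1:ℝ)+(k:ℝ))^10)⁻¹ := by rw [Finset.sum_const, nsmul_eq_mul]
      _ ≤ (2*(((k:ℝ)+1)*N^2/R + 1)) * (((1:ℝ)+(k:ℝ))^10)⁻¹ := by
          apply mul_le_mul_of_nonneg_right cardF (by positivity)
      _ ≤ (2*N^2/R + 2) * (((1:ℝ)+(k:ℝ))^2)⁻¹ := by
          have hk1 : (1:ℝ) ≤ 1 + (k:ℝ) := by have := Nat.cast_nonneg (α:=ℝ) k; linarith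
          have e1 : (2*(((k:ℝ)+1)*N^2/R + 1)) * (((1:ℝ)+(k:ℝ))^10)⁻¹
              = 2*N^2/R * (((k:ℝ)+1) * (((1:ℝ)+(k:ℝ))^10)⁻¹) + 2 * (((1:ℝ)+(k:ℝ))^10)⁻¹ := by
            field_simp
          rw [e1]
          have hne : ((1:ℝ)+(k:ℝ)) ≠ 0 := by positivity
          have p1 : ((k:ℝ)+1) * (((1:ℝ)+(k:ℝ))^10)⁻¹ ≤ (((1:ℝ)+(k:ℝ))^2)⁻¹ := by
            rw [mul_inv_le_iff₀ (by positivity),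
              show (((1:ℝ)+(k:ℝ))^2)⁻¹ * ((1:ℝ)+(k:ℝ))^10 = ((1:ℝ)+(k:ℝ))^8 from by
                field_simp]
            calc (k:ℝ)+1 = ((1:ℝ)+(k:ℝ))^1 := by ring
              _ ≤ ((1:ℝ)+(k:ℝ))^8 := pow_le_pow_right₀ hk1 (by norm_num)
          have p2 : (((1:ℝ)+(k:ℝ))^10)⁻¹ ≤ (((1:ℝ)+(k:ℝ))^2)⁻¹ := by
            apply inv_anti₀ (by positivity)
            exact pow_le_pow_right₀ hk1 (by norm_num)
          have h2R : (0:ℝ) ≤ 2*N^2/R := by positivity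
          nlinarith [mul_le_mul_of_nonneg_left p1 h2R, p2]
  calc ∑ j ∈ A.image κ, ∑ i ∈ A.filter (fun i => κ i = j), g i
      ≤ ∑ j ∈ A.image κ, (2*N^2/R + 2) * (((1:ℝ)+(j:ℝ))^2)⁻¹ := Finset.sum_le_sum fiber_bound
    _ = (2*N^2/R + 2) * ∑ j ∈ A.image κ, (((1:ℝ)+(j:ℝ))^2)⁻¹ := by rw [Finset.mul_sum]
    _ ≤ (2*N^2/R + 2) * 2 := by
        apply mul_le_mul_of_nonneg_left (sum_inv_sq _) (by positivity)
    _ = 4*N^2/R + 4 := by ring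


lemma inner_sum1 (N B q m : ℝ) (hN : 1 ≤ N) (hB : 2 ≤ B) (hq : B*N/2 ≤ |q|) (A : Finset ℤ) :
    ∑ a ∈ A, ((1 + |((a:ℝ)+q)^2 - m|/N^2)^10)⁻¹ * ((1+|(a:ℝ)|/N)^4)⁻¹ ≤ 48*N/B + 4 := by
  classical
  have hN0 : (0:ℝ) < N := by linarith
  have hB0 : (0:ℝ) < B := by linarith
  set f : ℤ → ℝ := fun a => ((1 + |((a:ℝ)+q)^2 - m|/N^2)^10)⁻¹ * ((1+|(a:ℝ)|/N)^4)⁻¹ with hf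
  set P : ℤ → Prop := fun a => |(a:ℝ)| < B*N/4 with hP
  have split := Finset.sum_filter_add_sum_filter_not A P f
  have near : ∑ a ∈ A.filter (fun a => P a), f a ≤ 16*N/B + 4 := by
    have step : ∀ a ∈ A.filter (fun a => P a), f a ≤ ((1 + |((a:ℝ)+q)^2 - m|/N^2)^10)⁻¹ := by
      intro a _
      have h1 : (1:ℝ) ≤ (1+|(a:ℝ)|/N)^4 := by
        apply one_le_pow₀
        have : (0:ℝ) ≤ |(a:ℝ)|/N := by positivity
        linarith
      calc f a ≤ ((1 + |((a:ℝ)+q)^2 - m|/N^2)^10)⁻¹ * 1 := by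
            apply mul_le_mul_of_nonneg_left _ (by positivity)
            rw [inv_le_one_iff₀]
            right; exact h1
        _ = _ := by ring
    calc ∑ a ∈ A.filter (fun a => P a), f a
        ≤ ∑ a ∈ A.filter (fun a => P a), ((1 + |((a:ℝ)+q)^2 - m|/N^2)^10)⁻¹ :=
          Finset.sum_le_sum step
      _ ≤ 4*N^2/(B*N/4) + 4 := by
          apply count_sum N (B*N/4) q m hN (by positivity)
          intro a ha
          rw [Finset.mem_filter] at ha
          have h2 : |(a:ℝ)| < B*N/4 := ha.2
          have h3 : |q| - |(a:ℝ)| ≤ |(a:ℝ) + q| := by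
            have := abs_add_le ((a:ℝ)+q) (-(a:ℝ))
            simp only [add_neg_cancel_comm, abs_neg] at this
            linarith
          linarith
      _ = 16*N/B + 4 := by field_simp; ring
  have far : ∑ a ∈ A.filter (fun a => ¬ P a), f a ≤ 32*N/B := by
    have step : ∀ a ∈ A.filter (fun a => ¬ P a), f a ≤ (4/B) * ((1+|(a:ℝ)|/N)^2)⁻¹ := by
      intro a ha
      rw [Finset.mem_filter] at ha
      have h2 : B*N/4 ≤ |(a:ℝ)| := not_lt.1 ha.2
      have hbase : (1:ℝ) ≤ 1+|(a:ℝ)|/N := by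
        have : (0:ℝ) ≤ |(a:ℝ)|/N := by positivity
        linarith
      have hB4 : B/4 ≤ 1+|(a:ℝ)|/N := by
        have hd : (B*N/4)/N ≤ |(a:ℝ)|/N := by gcongr
        have he : (B*N/4)/N = B/4 := by field_simp
        have : (0:ℝ) ≤ |(a:ℝ)|/N := by positivity
        linarith [he ▸ hd]
      have key : ((1+|(a:ℝ)|/N)^4)⁻¹ ≤ (4/B) * ((1+|(a:ℝ)|/N)^2)⁻¹ := by
        rw [show (1+|(a:ℝ)|/N)^4 = (1+|(a:ℝ)|/N)^2 * (1+|(a:ℝ)|/N)^2 from by ring,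
          mul_inv]
        apply mul_le_mul_of_nonneg_right _ (by positivity)
        calc ((1+|(a:ℝ)|/N)^2)⁻¹ ≤ (1+|(a:ℝ)|/N)⁻¹ := by
              apply inv_anti₀ (by positivity)
              nlinarith [hbase]
          _ ≤ (B/4)⁻¹ := inv_anti₀ (by positivity) hB4
          _ = 4/B := by rw [inv_div]
      calc f a ≤ 1 * ((1+|(a:ℝ)|/N)^4)⁻¹ := by
            apply mul_le_mul_of_nonneg_right _ (by positivity)
            rw [inv_le_one_iff₀]
            right
            apply one_le_pow₀
            have : (0:ℝ) ≤ |((a:ℝ)+q)^2 - m|/N^2 := by positivity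
            linarith
        _ = ((1+|(a:ℝ)|/N)^4)⁻¹ := by ring
        _ ≤ (4/B) * ((1+|(a:ℝ)|/N)^2)⁻¹ := key
    calc ∑ a ∈ A.filter (fun a => ¬ P a), f a
        ≤ ∑ a ∈ A.filter (fun a => ¬ P a), (4/B) * ((1+|(a:ℝ)|/N)^2)⁻¹ :=
          Finset.sum_le_sum step
      _ = (4/B) * ∑ a ∈ A.filter (fun a => ¬ P a), ((1+|(a:ℝ)|/N)^2)⁻¹ := by
          rw [Finset.mul_sum]
      _ ≤ (4/B) * (8*N) := by
          apply mul_le_mul_of_nonneg_left (sum_g2_le N hN _) (by positivity)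
      _ = 32*N/B := by ring
  rw [← split]
  exact le_trans (add_le_add near far) (le_of_eq (by ring))

lemma znorm_nonneg (w : Fin 4 → ℤ) : 0 ≤ znorm w := Real.sqrt_nonneg _

lemma znorm_sq (w : Fin 4 → ℤ) : znorm w ^ 2 = ∑ i, ((w i : ℝ))^2 :=
  Real.sq_sqrt (by positivity)

lemma abs_le_znorm (w : Fin 4 → ℤ) (j : Fin 4) : |((w j : ℤ) : ℝ)| ≤ znorm w := by
  rw [znorm, ← Real.sqrt_sq_eq_abs]
  apply Real.sqrt_le_sqrt
  exact Finset.single_le_sum (f := fun i => ((w i : ℤ):ℝ)^2) (fun i _ => by positivity)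
    (Finset.mem_univ j)

def e4 : (ℤ×ℤ×ℤ×ℤ) ≃ (Fin 4 → ℤ) where
  toFun x := ![x.2.2.2, x.1, x.2.1, x.2.2.1]
  invFun v := (v 1, v 2, v 3, v 0)
  left_inv x := rfl
  right_inv v := by
    funext j
    fin_cases j <;> rfl

noncomputable def mconst (p : Fin 4 → ℤ) (b c d : ℤ) : ℝ :=
  ((p 0 : ℤ):ℝ)^2 - ((((p 1 : ℤ):ℝ)+(b:ℝ))^2 - ((p 1 : ℤ):ℝ)^2
    + ((((p 2 : ℤ):ℝ)+(c:ℝ))^2 - ((p 2 : ℤ):ℝ)^2)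
    + ((((p 3 : ℤ):ℝ)+(d:ℝ))^2 - ((p 3 : ℤ):ℝ)^2))

lemma pointwise_bd (N : ℝ) (p : Fin 4 → ℤ) (hN : 1 ≤ N) (a b c d : ℤ) :
    ((1 + |znorm p ^ 2 - znorm (p + ![a,b,c,d]) ^ 2| / N ^ 2) ^ 10)⁻¹ *
      ((1 + znorm ![a,b,c,d] / N) ^ 10)⁻¹
    ≤ ((1+|(b:ℝ)|/N)^2)⁻¹ * (((1+|(c:ℝ)|/N)^2)⁻¹ * (((1+|(d:ℝ)|/N)^2)⁻¹ *
      (((1 + |((a:ℝ)+((p 0 : ℤ):ℝ))^2 - mconst p b c d|/N^2)^10)⁻¹ * ((1+|(a:ℝ)|/N)^4)⁻¹))) := by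
  have hN0 : (0:ℝ) < N := by linarith
  have w0 : (![a,b,c,d] : Fin 4 → ℤ) 0 = a := rfl
  have w1 : (![a,b,c,d] : Fin 4 → ℤ) 1 = b := rfl
  have w2 : (![a,b,c,d] : Fin 4 → ℤ) 2 = c := rfl
  have w3 : (![a,b,c,d] : Fin 4 → ℤ) 3 = d := rfl
  have key : znorm p ^ 2 - znorm (p + ![a,b,c,d]) ^ 2
      = -(((a:ℝ)+((p 0 : ℤ):ℝ))^2 - mconst p b c d) := by
    rw [znorm_sq, znorm_sq, Fin.sum_univ_four, Fin.sum_univ_four]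
    simp only [Pi.add_apply, w0, w1, w2, w3, Int.cast_add, mconst]
    ring
  rw [key, abs_neg]
  set W := ((1 + |((a:ℝ)+((p 0 : ℤ):ℝ))^2 - mconst p b c d|/N^2)^10)⁻¹ with hW
  have hW0 : 0 ≤ W := by positivity
  set z := znorm ![a,b,c,d] with hz
  have hz0 : (0:ℝ) ≤ z := znorm_nonneg _
  have hza : |(a:ℝ)| ≤ z := by have := abs_le_znorm ![a,b,c,d] 0; rwa [w0] at this
  have hzb : |(b:ℝ)| ≤ z := by have := abs_le_znorm ![a,b,c,d] 1; rwa [w1] at this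
  have hzc : |(c:ℝ)| ≤ z := by have := abs_le_znorm ![a,b,c,d] 2; rwa [w2] at this
  have hzd : |(d:ℝ)| ≤ z := by have := abs_le_znorm ![a,b,c,d] 3; rwa [w3] at this
  have main : ((1+z/N)^10)⁻¹
      ≤ ((1+|(b:ℝ)|/N)^2)⁻¹ * (((1+|(c:ℝ)|/N)^2)⁻¹ * (((1+|(d:ℝ)|/N)^2)⁻¹ *
        ((1+|(a:ℝ)|/N)^4)⁻¹)) := by
    rw [show ((1+|(b:ℝ)|/N)^2)⁻¹ * (((1+|(c:ℝ)|/N)^2)⁻¹ * (((1+|(d:ℝ)|/N)^2)⁻¹ *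
        ((1+|(a:ℝ)|/N)^4)⁻¹))
      = ((1+|(b:ℝ)|/N)^2 * ((1+|(c:ℝ)|/N)^2 * ((1+|(d:ℝ)|/N)^2 * (1+|(a:ℝ)|/N)^4)))⁻¹ from by
        rw [mul_inv, mul_inv, mul_inv]]
    apply inv_anti₀ (by positivity)
    calc (1+|(b:ℝ)|/N)^2 * ((1+|(c:ℝ)|/N)^2 * ((1+|(d:ℝ)|/N)^2 * (1+|(a:ℝ)|/N)^4))
        ≤ (1+z/N)^2 * ((1+z/N)^2 * ((1+z/N)^2 * (1+z/N)^4)) := by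
          gcongr <;> positivity
      _ = (1+z/N)^10 := by ring
  calc W * ((1+z/N)^10)⁻¹ ≤ W * (((1+|(b:ℝ)|/N)^2)⁻¹ * (((1+|(c:ℝ)|/N)^2)⁻¹ *
        (((1+|(d:ℝ)|/N)^2)⁻¹ * ((1+|(a:ℝ)|/N)^4)⁻¹))) :=
        mul_le_mul_of_nonneg_left main hW0
    _ = _ := by ring

lemma main_aux (N B : ℝ) (p : Fin 4 → ℤ) (hN : 1 ≤ N) (hB : 2 ≤ B)
    (hp0 : B*N/2 ≤ |((p 0 : ℤ) : ℝ)|) :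
    ∑' v : Fin 4 → ℤ, ((1 + |znorm p ^ 2 - znorm (p + v) ^ 2| / N ^ 2) ^ 10)⁻¹ *
      ((1 + znorm v / N) ^ 10)⁻¹ ≤ 512*N^3*(48*N/B + 4) := by
  classical
  have hN0 : (0:ℝ) < N := by linarith
  have hB0 : (0:ℝ) < B := by linarith
  rw [← e4.tsum_eq]
  apply tsum_le_of_sum_le' (by positivity)
  intro u
  set g2 : ℤ → ℝ := fun t => ((1+|(t:ℝ)|/N)^2)⁻¹ with hg2
  set q : ℝ := ((p 0 : ℤ):ℝ) with hq
  set Ft : ℤ → ℤ → ℤ → ℤ → ℝ := fun a b c d =>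
    ((1 + |((a:ℝ)+q)^2 - mconst p b c d|/N^2)^10)⁻¹ * ((1+|(a:ℝ)|/N)^4)⁻¹ with hFt
  set F : (ℤ×ℤ×ℤ×ℤ) → ℝ := fun x =>
    ((1 + |znorm p ^ 2 - znorm (p + e4 x) ^ 2| / N ^ 2) ^ 10)⁻¹ *
      ((1 + znorm (e4 x) / N) ^ 10)⁻¹ with hF
  have hFnn : ∀ x, 0 ≤ F x := fun x => by positivity
  have hpt : ∀ b c d a : ℤ, F (b,c,d,a) ≤ g2 b * (g2 c * (g2 d * Ft a b c d)) := by
    intro b c d a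
    exact pointwise_bd N p hN a b c d
  set S1 := u.image (·.1) with hS1
  set S2 := u.image (·.2.1) with hS2
  set S3 := u.image (·.2.2.1) with hS3
  set S4 := u.image (·.2.2.2) with hS4
  have hsub : u ⊆ S1 ×ˢ (S2 ×ˢ (S3 ×ˢ S4)) := by
    intro x hx
    simp only [Finset.mem_product]
    exact ⟨Finset.mem_image_of_mem _ hx, Finset.mem_image_of_mem _ hx,
      Finset.mem_image_of_mem _ hx, Finset.mem_image_of_mem _ hx⟩
  have hg2nn : ∀ t, 0 ≤ g2 t := fun t => by positivity
  have hg2sum : ∀ A : Finset ℤ, ∑ t ∈ A, g2 t ≤ 8*N := fun A => sum_g2_le N hN A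
  have hFtsum : ∀ (b c d : ℤ) (A : Finset ℤ), ∑ a ∈ A, Ft a b c d ≤ 48*N/B + 4 := by
    intro b c d A
    exact inner_sum1 N B q (mconst p b c d) hN hB hp0 A
  have hIpos : (0:ℝ) ≤ 48*N/B + 4 := by positivity
  calc ∑ x ∈ u, F x ≤ ∑ x ∈ S1 ×ˢ (S2 ×ˢ (S3 ×ˢ S4)), F x :=
        Finset.sum_le_sum_of_subset_of_nonneg hsub (fun x _ _ => hFnn x)
    _ = ∑ b ∈ S1, ∑ c ∈ S2, ∑ d ∈ S3, ∑ a ∈ S4, F (b,c,d,a) := by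
        rw [Finset.sum_product]
        refine Finset.sum_congr rfl fun b _ => ?_
        rw [Finset.sum_product]
        refine Finset.sum_congr rfl fun c _ => ?_
        rw [Finset.sum_product]
    _ ≤ ∑ b ∈ S1, g2 b * (8*N * (8*N * (48*N/B + 4))) := by
        apply Finset.sum_le_sum
        intro b _
        calc ∑ c ∈ S2, ∑ d ∈ S3, ∑ a ∈ S4, F (b,c,d,a)
            ≤ ∑ c ∈ S2, g2 b * (g2 c * (8*N * (48*N/B + 4))) := by
              apply Finset.sum_le_sum
              intro c _
              calc ∑ d ∈ S3, ∑ a ∈ S4, F (b,c,d,a)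
                  ≤ ∑ d ∈ S3, g2 b * (g2 c * (g2 d * (48*N/B + 4))) := by
                    apply Finset.sum_le_sum
                    intro d _
                    calc ∑ a ∈ S4, F (b,c,d,a)
                        ≤ ∑ a ∈ S4, g2 b * (g2 c * (g2 d * Ft a b c d)) :=
                          Finset.sum_le_sum (fun a _ => hpt b c d a)
                      _ = g2 b * (g2 c * (g2 d * ∑ a ∈ S4, Ft a b c d)) := by
                          rw [← Finset.mul_sum, ← Finset.mul_sum, ← Finset.mul_sum]
                      _ ≤ g2 b * (g2 c * (g2 d * (48*N/B + 4))) := by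
                          apply mul_le_mul_of_nonneg_left _ (hg2nn b)
                          apply mul_le_mul_of_nonneg_left _ (hg2nn c)
                          exact mul_le_mul_of_nonneg_left (hFtsum b c d S4) (hg2nn d)
                  _ = g2 b * (g2 c * (48*N/B + 4)) * ∑ d ∈ S3, g2 d := by
                      rw [Finset.mul_sum]
                      refine Finset.sum_congr rfl fun d _ => by ring
                  _ ≤ g2 b * (g2 c * (48*N/B + 4)) * (8*N) := by
                      apply mul_le_mul_of_nonneg_left (hg2sum S3) (by positivity)
                  _ = g2 b * (g2 c * (8*N * (48*N/B + 4))) := by ring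
          _ = g2 b * (8*N * (48*N/B + 4)) * ∑ c ∈ S2, g2 c := by
              rw [Finset.mul_sum]
              refine Finset.sum_congr rfl fun c _ => by ring
          _ ≤ g2 b * (8*N * (48*N/B + 4)) * (8*N) := by
              apply mul_le_mul_of_nonneg_left (hg2sum S2) (by positivity)
          _ = g2 b * (8*N * (8*N * (48*N/B + 4))) := by ring
    _ = (8*N * (8*N * (48*N/B + 4))) * ∑ b ∈ S1, g2 b := by
        rw [Finset.mul_sum]
        refine Finset.sum_congr rfl fun b _ => by ring
    _ ≤ (8*N * (8*N * (48*N/B + 4))) * (8*N) := by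
        apply mul_le_mul_of_nonneg_left (hg2sum S1) (by positivity)
    _ = 512*N^3*(48*N/B + 4) := by ring

lemma znorm_comp (σ : Equiv.Perm (Fin 4)) (w : Fin 4 → ℤ) : znorm (w ∘ σ) = znorm w := by
  unfold znorm
  congr 1
  exact Equiv.sum_comp σ (fun j => ((w j : ℤ):ℝ)^2)

/-- Lattice-sum estimate at the heart of Lemma 8.2: for `N ≥ 1`, `B ≥ 2` and
`p ∈ ℤ⁴` with `|p| ≥ BN`,
`N⁻⁴ ∑_{v ∈ ℤ⁴} (1 + ||p|²-|p+v|²|/N²)⁻¹⁰ (1 + |v|/N)⁻¹⁰ ≲ B^{-1/100} + N^{-1/100}`. -/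
theorem stmt10 :
    ∃ C : ℝ, 0 < C ∧
      ∀ (N B : ℝ) (p : Fin 4 → ℤ),
        1 ≤ N → 2 ≤ B → B * N ≤ znorm p →
        N ^ (-(4 : ℤ)) *
            ∑' v : Fin 4 → ℤ,
              ((1 + |znorm p ^ 2 - znorm (p + v) ^ 2| / N ^ 2) ^ 10)⁻¹ *
                ((1 + znorm v / N) ^ 10)⁻¹ ≤
          C * (B ^ (-(1 : ℝ) / 100) + N ^ (-(1 : ℝ) / 100)) := by
  refine ⟨24576, by norm_num, ?_⟩
  intro N B p hN hB hp
  have hN0 : (0:ℝ) < N := by linarith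
  have hB0 : (0:ℝ) < B := by linarith
  -- max coordinate
  obtain ⟨i, _, hi⟩ := Finset.exists_max_image (Finset.univ : Finset (Fin 4))
    (fun j => |p j|) ⟨0, Finset.mem_univ 0⟩
  have habs : ∀ j, |((p j : ℤ):ℝ)| ≤ |((p i : ℤ):ℝ)| := by
    intro j
    have := hi j (Finset.mem_univ j)
    exact_mod_cast this
  have hsq : ∀ j, ((p j : ℤ):ℝ)^2 ≤ ((p i : ℤ):ℝ)^2 := by
    intro j
    rw [← sq_abs ((p j : ℤ):ℝ), ← sq_abs ((p i : ℤ):ℝ)]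
    exact pow_le_pow_left₀ (abs_nonneg _) (habs j) 2
  have hzn : znorm p ≤ 2*|((p i : ℤ):ℝ)| := by
    rw [znorm]
    have hle : ∑ j, ((p j : ℤ):ℝ)^2 ≤ (2*|((p i : ℤ):ℝ)|)^2 := by
      rw [Fin.sum_univ_four]
      have := sq_abs ((p i : ℤ):ℝ)
      nlinarith [hsq 0, hsq 1, hsq 2, hsq 3]
    calc Real.sqrt (∑ j, ((p j : ℤ):ℝ)^2) ≤ Real.sqrt ((2*|((p i : ℤ):ℝ)|)^2) :=
          Real.sqrt_le_sqrt hle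
      _ = 2*|((p i : ℤ):ℝ)| := Real.sqrt_sq (by positivity)
  have hpi : B*N/2 ≤ |((p i : ℤ):ℝ)| := by linarith
  -- swap coordinates 0 and i
  set σ : Equiv.Perm (Fin 4) := Equiv.swap 0 i with hσ
  set eσ : (Fin 4 → ℤ) ≃ (Fin 4 → ℤ) := Equiv.arrowCongr σ.symm (Equiv.refl ℤ) with heσ
  have heσ_app : ∀ v : Fin 4 → ℤ, eσ v = v ∘ σ := by
    intro v; funext j; rfl
  have hσσ : ∀ j, σ (σ j) = j := by
    intro j
    rw [hσ]
    exact Equiv.swap_apply_self _ _ _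
  have htsum : ∑' v : Fin 4 → ℤ,
        ((1 + |znorm p ^ 2 - znorm (p + v) ^ 2| / N ^ 2) ^ 10)⁻¹ *
          ((1 + znorm v / N) ^ 10)⁻¹
      = ∑' v : Fin 4 → ℤ,
        ((1 + |znorm (p ∘ σ) ^ 2 - znorm ((p ∘ σ) + v) ^ 2| / N ^ 2) ^ 10)⁻¹ *
          ((1 + znorm v / N) ^ 10)⁻¹ := by
    rw [← eσ.tsum_eq (fun v => ((1 + |znorm p ^ 2 - znorm (p + v) ^ 2| / N ^ 2) ^ 10)⁻¹ *
      ((1 + znorm v / N) ^ 10)⁻¹)]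
    apply tsum_congr
    intro v
    have h1 : znorm (eσ v) = znorm v := by rw [heσ_app]; exact znorm_comp σ v
    have h2 : znorm (p + eσ v) = znorm ((p ∘ σ) + v) := by
      rw [heσ_app]
      have : p + v ∘ σ = ((p ∘ σ) + v) ∘ σ := by
        funext j
        simp only [Pi.add_apply, Function.comp_apply, hσσ j]
      rw [this, znorm_comp]
    have h3 : znorm (p ∘ σ) = znorm p := znorm_comp σ p
    simp only [h1, h2, h3]
  rw [htsum]
  have hp0' : B*N/2 ≤ |(((p ∘ σ) 0 : ℤ):ℝ)| := by
    have : (p ∘ σ) 0 = p i := by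
      simp only [Function.comp_apply, hσ, Equiv.swap_apply_left]
    rw [this]
    exact hpi
  have hmain := main_aux N B (p ∘ σ) hN hB hp0'
  -- final arithmetic
  have hx : 1/B ≤ B ^ ((-1:ℝ)/100) := by
    have hB1 : (1:ℝ) ≤ B := by linarith
    have e1 : B ^ (-1:ℝ) = 1/B := by
      rw [show (-1:ℝ) = ((-1:ℤ):ℝ) by norm_num, Real.rpow_intCast]
      simp
    rw [← e1]
    exact Real.rpow_le_rpow_of_exponent_le hB1 (by norm_num)
  have hy : 1/N ≤ N ^ ((-1:ℝ)/100) := by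
    have hN1 : (1:ℝ) ≤ N := hN
    have e1 : N ^ (-1:ℝ) = 1/N := by
      rw [show (-1:ℝ) = ((-1:ℤ):ℝ) by norm_num, Real.rpow_intCast]
      simp
    rw [← e1]
    exact Real.rpow_le_rpow_of_exponent_le hN1 (by norm_num)
  have hzp : N ^ (-(4:ℤ)) = (N^4)⁻¹ := by
    rw [zpow_neg, zpow_ofNat]
  rw [hzp]
  have hT0 : (0:ℝ) ≤ (N^4)⁻¹ := by positivity
  calc (N^4)⁻¹ * ∑' v : Fin 4 → ℤ,
        ((1 + |znorm (p ∘ σ) ^ 2 - znorm ((p ∘ σ) + v) ^ 2| / N ^ 2) ^ 10)⁻¹ *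
          ((1 + znorm v / N) ^ 10)⁻¹
      ≤ (N^4)⁻¹ * (512*N^3*(48*N/B + 4)) := mul_le_mul_of_nonneg_left hmain hT0
    _ = 24576*(1/B) + 2048*(1/N) := by field_simp; ring
    _ ≤ 24576*(B ^ ((-1:ℝ)/100)) + 24576*(N ^ ((-1:ℝ)/100)) := by
        have h1 := mul_le_mul_of_nonneg_left hx (show (0:ℝ) ≤ 24576 by norm_num)
        have h2 := mul_le_mul_of_nonneg_left hy (show (0:ℝ) ≤ 2048 by norm_num)
        have h3 : (0:ℝ) ≤ N ^ ((-1:ℝ)/100) := Real.rpow_nonneg (le_of_lt hN0) _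
        nlinarith [h1, h2, h3]
    _ = 24576 * (B ^ (-(1:ℝ) / 100) + N ^ (-(1:ℝ) / 100)) := by
        rw [show -(1:ℝ)/100 = (-1:ℝ)/100 by norm_num]
        ring
end
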